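/- arXiv:1105.2736 — 2 statements merged into one kernel-verified Lean document; each statement's English description precedes it below -/
import Mathlib

section
/- Let γ : ℝ → ℝ³ be a C² curve with |γ'| ≡ 1, γ(s+ℓ) = γ(s) + a for all s (ℓ > 0, a ∈ ℝ³), and |γ''(s)| ≤ 1/r for all s with r > 0. Let Γ : ℝ → ℝ³ be Lipschitz with |Γ'(s)| = 1 for a.e. s and Γ(s+L) = Γ(s) + a for all s (L > 0). Let p : ℝ → ℝ be continuous with p(s+L) = p(s) + ℓ for all s and sup_{s ∈ ℝ} |Γ(s) − γ(p(s))| < r/8. Then there exists a unique continuous function σ : ℝ → ℝ satisfying, for all s ∈ ℝ: (1) σ(s+L) = σ(s) + ℓ; (2) |Γ(s) − γ(σ(s))| < r/8; (3) (Γ(s) − γ(σ(s))) · γ'(σ(s)) = 0; (4) |σ(s) − p(s)| < r/4. -/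
/-!
For fixed `s`, the function `t ↦ ⟪Γ s - γ t, γ' t⟫` has derivative `⟪Γ s - γ t, γ'' t⟫ - 1`.
On the window `|t - p s| ≤ r / 4` the point `γ t` stays within `3r/8` of `Γ s`, so by the
curvature bound this derivative is at most `3/8 - 1`: the function is strictly decreasing there,
and since it is smaller than `r / 8` in absolute value at `p s`, it has exactly one zero `σ s`
in the window. Uniqueness of the zero gives the quasi-periodicity of `σ`, the sign change across
it gives continuity, and since `‖Γ s - γ t‖²` has derivative `-2⟪Γ s - γ t, γ' t⟫`, the zero
minimises the distance on the window, whence `‖Γ s - γ (σ s)‖ ≤ ‖Γ s - γ (p s)‖ < r / 8`.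
-/

noncomputable section
open Real MeasureTheory

abbrev R3 : Type := EuclideanSpace ℝ (Fin 3)

open Set

section RealFunctions

variable {g g' : ℝ → ℝ}

theorem image_sub_le_mul_sub_of_hasDerivAt_le {D : Set ℝ} (hD : Convex ℝ D) {C : ℝ}
    (hg : ∀ t ∈ D, HasDerivAt g (g' t) t) (hg' : ∀ t ∈ D, g' t ≤ C) {x y : ℝ}
    (hx : x ∈ D) (hy : y ∈ D) (hxy : x ≤ y) : g y - g x ≤ C * (y - x) :=
  hD.image_sub_le_mul_sub_of_deriv_le (fun t ht => (hg t ht).continuousAt.continuousWithinAt)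
    (fun t ht => (hg t (interior_subset ht)).differentiableAt.differentiableWithinAt)
    (fun t ht => (hg t (interior_subset ht)).deriv ▸ hg' t (interior_subset ht)) x hx y hy hxy

theorem strictAntiOn_of_hasDerivAt_le_neg {D : Set ℝ} (hD : Convex ℝ D) {k : ℝ} (hk : 0 < k)
    (hg : ∀ t ∈ D, HasDerivAt g (g' t) t) (hg' : ∀ t ∈ D, g' t ≤ -k) : StrictAntiOn g D :=
  fun x hx y hy hxy => by
    have := image_sub_le_mul_sub_of_hasDerivAt_le hD hg hg' hx hy hxy.le
    nlinarith

theorem exists_mem_Ioo_eq_zero_of_hasDerivAt_le {c ρ k : ℝ} (hρ : 0 < ρ)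
    (hg : ∀ t ∈ Icc (c - ρ) (c + ρ), HasDerivAt g (g' t) t)
    (hg' : ∀ t ∈ Icc (c - ρ) (c + ρ), g' t ≤ -k) (hgc : |g c| < k * ρ) :
    ∃ t ∈ Ioo (c - ρ) (c + ρ), g t = 0 := by
  have hc : c ∈ Icc (c - ρ) (c + ρ) := ⟨by linarith, by linarith⟩
  have hleft := image_sub_le_mul_sub_of_hasDerivAt_le (convex_Icc _ _) hg hg'
    (left_mem_Icc.2 (by linarith)) hc (by linarith)
  have hright := image_sub_le_mul_sub_of_hasDerivAt_le (convex_Icc _ _) hg hg' hc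
    (right_mem_Icc.2 (by linarith)) (by linarith)
  have hzero : (0 : ℝ) ∈ Ioo (g (c + ρ)) (g (c - ρ)) := by
    constructor <;> nlinarith [abs_lt.1 hgc]
  exact intermediate_value_Ioo' (by linarith)
    (fun t ht => (hg t ht).continuousAt.continuousWithinAt) hzero

theorem Function.Periodic.lt_of_iSup_lt {f : ℝ → ℝ} {L c : ℝ} (hf : Function.Periodic f L)
    (hL : L ≠ 0) (hcont : Continuous f) (hsup : ⨆ s, f s < c) (s : ℝ) : f s < c :=
  (le_ciSup (hf.compact_of_continuous hL hcont).bddAbove s).trans_lt hsup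

theorem isMinOn_Icc_of_hasDerivAt_nonpos_nonneg {f f' : ℝ → ℝ} {a b m : ℝ} (hm : m ∈ Icc a b)
    (hf : ∀ t ∈ Icc a b, HasDerivAt f (f' t) t) (hleft : ∀ t ∈ Ioo a m, f' t ≤ 0)
    (hright : ∀ t ∈ Ioo m b, 0 ≤ f' t) : IsMinOn f (Icc a b) m := by
  have hcont : ContinuousOn f (Icc a b) := fun t ht => (hf t ht).continuousAt.continuousWithinAt
  refine isMinOn_iff.2 fun t ht => ?_
  rcases le_total t m with htm | hmt
  · have hsub : Icc t m ⊆ Icc a b := Icc_subset_Icc ht.1 hm.2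
    refine antitoneOn_of_hasDerivWithinAt_nonpos (convex_Icc t m) (hcont.mono hsub)
      (fun u hu => (hf u (hsub (interior_subset hu))).hasDerivWithinAt) (fun u hu => hleft u ?_)
      (left_mem_Icc.2 htm) (right_mem_Icc.2 htm) htm
    rw [interior_Icc] at hu
    exact ⟨ht.1.trans_lt hu.1, hu.2⟩
  · have hsub : Icc m t ⊆ Icc a b := Icc_subset_Icc hm.1 ht.2
    refine monotoneOn_of_hasDerivWithinAt_nonneg (convex_Icc m t) (hcont.mono hsub)
      (fun u hu => (hf u (hsub (interior_subset hu))).hasDerivWithinAt) (fun u hu => hright u ?_)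
      (left_mem_Icc.2 hmt) (right_mem_Icc.2 hmt) hmt
    rw [interior_Icc] at hu
    exact ⟨hu.1, hu.2.trans_le ht.2⟩

theorem continuous_of_strictAntiOn_of_eq_zero {X : Type*} [TopologicalSpace X]
    {G : X → ℝ → ℝ} {c σ : X → ℝ} {ρ : ℝ} (hc : Continuous c)
    (hG : ∀ t, Continuous fun s => G s t)
    (hanti : ∀ s, StrictAntiOn (G s) (Icc (c s - ρ) (c s + ρ)))
    (hσ : ∀ s, σ s ∈ Ioo (c s - ρ) (c s + ρ)) (hσ0 : ∀ s, G s (σ s) = 0) : Continuous σ := by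
  -- Near `s₀`, a point `u' < σ s₀` stays in the window of `s` with `G s u' > 0 = G s (σ s)`,
  -- which forces `u' < σ s`; symmetrically on the right.
  refine continuous_iff_continuousAt.2 fun s₀ => tendsto_order.2 ⟨fun u hu => ?_, fun v hv => ?_⟩
  · obtain ⟨u', hu', hu'σ⟩ := exists_between (max_lt hu (hσ s₀).1)
    have hpos : 0 < G s₀ u' := hσ0 s₀ ▸ hanti s₀ ⟨(le_max_right _ _).trans hu'.le, by
      linarith [(hσ s₀).2]⟩ (Ioo_subset_Icc_self (hσ s₀)) hu'σ
    filter_upwards [(hc.tendsto s₀).eventually_lt_const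
      (by linarith [le_max_right u (c s₀ - ρ)] : c s₀ < u' + ρ),
      (hc.tendsto s₀).eventually_const_lt (by linarith [(hσ s₀).2] : u' - ρ < c s₀),
      (hG u' |>.tendsto s₀).eventually_const_lt hpos] with s hs₁ hs₂ hs₃
    have hlt := ((hanti s).lt_iff_gt (Ioo_subset_Icc_self (hσ s))
      ⟨by linarith, by linarith⟩).1 (hσ0 s ▸ hs₃)
    linarith [le_max_left u (c s₀ - ρ)]
  · obtain ⟨v', hσv', hv'⟩ := exists_between (lt_min hv (hσ s₀).2)
    have hneg : G s₀ v' < 0 := hσ0 s₀ ▸ hanti s₀ (Ioo_subset_Icc_self (hσ s₀))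
      ⟨by linarith [(hσ s₀).1], hv'.le.trans (min_le_right _ _)⟩ hσv'
    filter_upwards [(hc.tendsto s₀).eventually_const_lt
      (by linarith [min_le_right v (c s₀ + ρ)] : v' - ρ < c s₀),
      (hc.tendsto s₀).eventually_lt_const (by linarith [(hσ s₀).1] : c s₀ < v' + ρ),
      (hG v' |>.tendsto s₀).eventually_lt_const hneg] with s hs₁ hs₂ hs₃
    have hlt := ((hanti s).lt_iff_gt ⟨by linarith, by linarith⟩
      (Ioo_subset_Icc_self (hσ s))).1 (hσ0 s ▸ hs₃)
    linarith [min_le_left v (c s₀ + ρ)]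

end RealFunctions

section Curves

variable {E : Type*} [NormedAddCommGroup E] [InnerProductSpace ℝ E] {γ : ℝ → E} {x : E}

def tangentComponent (γ : ℝ → E) (x : E) (t : ℝ) : ℝ := inner ℝ (x - γ t) (deriv γ t)

theorem hasDerivAt_tangentComponent {t : ℝ} (hγ : DifferentiableAt ℝ γ t)
    (hγ' : DifferentiableAt ℝ (deriv γ) t) (hunit : ‖deriv γ t‖ = 1) :
    HasDerivAt (tangentComponent γ x) (inner ℝ (x - γ t) (deriv (deriv γ) t) - 1) t := by
  refine ((hγ.hasDerivAt.const_sub x).inner ℝ hγ'.hasDerivAt).congr_deriv ?_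
  rw [inner_neg_left, real_inner_self_eq_norm_sq, hunit]
  ring

theorem hasDerivAt_norm_sub_sq {t : ℝ} (hγ : DifferentiableAt ℝ γ t) :
    HasDerivAt (fun t => ‖x - γ t‖ ^ 2) (-2 * tangentComponent γ x t) t := by
  refine (hγ.hasDerivAt.const_sub x).norm_sq.congr_deriv ?_
  rw [tangentComponent, inner_neg_right]
  ring

variable {r t₀ : ℝ}

theorem inner_deriv_deriv_sub_one_le (hγ : Differentiable ℝ γ) (hunit : ∀ t, ‖deriv γ t‖ = 1)
    (hr : 0 < r) (hcurv : ∀ t, ‖deriv (deriv γ) t‖ ≤ 1 / r) (hx : ‖x - γ t₀‖ < r / 8) {t : ℝ}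
    (ht : t ∈ Icc (t₀ - r / 4) (t₀ + r / 4)) :
    inner ℝ (x - γ t) (deriv (deriv γ) t) - 1 ≤ -(5 / 8) := by
  have hlip : LipschitzWith 1 γ :=
    lipschitzWith_of_nnnorm_deriv_le hγ fun t => by simp [← NNReal.coe_le_coe, hunit]
  have hdist : ‖x - γ t‖ ≤ 3 / 8 * r := calc
    ‖x - γ t‖ ≤ ‖x - γ t₀‖ + ‖γ t₀ - γ t‖ := norm_sub_le_norm_sub_add_norm_sub _ _ _
    _ ≤ r / 8 + |t₀ - t| := by
      gcongr
      simpa [dist_eq_norm, Real.dist_eq] using hlip.dist_le_mul t₀ t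
    _ ≤ 3 / 8 * r := by linarith [mem_Icc_iff_abs_le.2 ht]
  calc inner ℝ (x - γ t) (deriv (deriv γ) t) - 1
      ≤ ‖x - γ t‖ * ‖deriv (deriv γ) t‖ - 1 := by gcongr; exact real_inner_le_norm _ _
    _ ≤ 3 / 8 * r * (1 / r) - 1 := by gcongr; exact hcurv t
    _ = -(5 / 8) := by field_simp; ring

theorem strictAntiOn_tangentComponent (hγ : Differentiable ℝ γ)
    (hγ' : Differentiable ℝ (deriv γ)) (hunit : ∀ t, ‖deriv γ t‖ = 1) (hr : 0 < r)
    (hcurv : ∀ t, ‖deriv (deriv γ) t‖ ≤ 1 / r) (hx : ‖x - γ t₀‖ < r / 8) :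
    StrictAntiOn (tangentComponent γ x) (Icc (t₀ - r / 4) (t₀ + r / 4)) :=
  strictAntiOn_of_hasDerivAt_le_neg (convex_Icc _ _) (by norm_num : (0 : ℝ) < 5 / 8)
    (fun t _ => hasDerivAt_tangentComponent (hγ t) (hγ' t) (hunit t))
    (fun _ ht => inner_deriv_deriv_sub_one_le hγ hunit hr hcurv hx ht)

theorem exists_tangentComponent_eq_zero (hγ : Differentiable ℝ γ)
    (hγ' : Differentiable ℝ (deriv γ)) (hunit : ∀ t, ‖deriv γ t‖ = 1) (hr : 0 < r)
    (hcurv : ∀ t, ‖deriv (deriv γ) t‖ ≤ 1 / r) (hx : ‖x - γ t₀‖ < r / 8) :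
    ∃ t ∈ Ioo (t₀ - r / 4) (t₀ + r / 4), tangentComponent γ x t = 0 := by
  refine exists_mem_Ioo_eq_zero_of_hasDerivAt_le (by positivity)
    (fun t _ => hasDerivAt_tangentComponent (hγ t) (hγ' t) (hunit t))
    (fun _ ht => inner_deriv_deriv_sub_one_le hγ hunit hr hcurv hx ht) ?_
  calc |tangentComponent γ x t₀| ≤ ‖x - γ t₀‖ * ‖deriv γ t₀‖ := abs_real_inner_le_norm _ _
    _ < 5 / 8 * (r / 4) := by rw [hunit, mul_one]; linarith

theorem norm_sub_le_of_tangentComponent_eq_zero (hγ : Differentiable ℝ γ)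
    (hγ' : Differentiable ℝ (deriv γ)) (hunit : ∀ t, ‖deriv γ t‖ = 1) (hr : 0 < r)
    (hcurv : ∀ t, ‖deriv (deriv γ) t‖ ≤ 1 / r) (hx : ‖x - γ t₀‖ < r / 8) {σ : ℝ}
    (hσ : σ ∈ Icc (t₀ - r / 4) (t₀ + r / 4)) (hσ0 : tangentComponent γ x σ = 0) {t : ℝ}
    (ht : t ∈ Icc (t₀ - r / 4) (t₀ + r / 4)) : ‖x - γ σ‖ ≤ ‖x - γ t‖ := by
  have hanti := strictAntiOn_tangentComponent hγ hγ' hunit hr hcurv hx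
  have hmin := isMinOn_Icc_of_hasDerivAt_nonpos_nonneg hσ
    (fun t _ => hasDerivAt_norm_sub_sq (x := x) (hγ t)) (fun u hu => ?_) (fun u hu => ?_)
  · exact (sq_le_sq₀ (norm_nonneg _) (norm_nonneg _)).1 (isMinOn_iff.1 hmin t ht)
  · have := hanti ⟨hu.1.le, hu.2.le.trans hσ.2⟩ hσ hu.2
    linarith
  · have := hanti hσ ⟨hσ.1.trans hu.1.le, hu.2.le⟩ hu.1
    linarith

theorem tangentComponent_add_period {ℓ : ℝ} {a : E} (hper : ∀ s, γ (s + ℓ) = γ s + a) (t : ℝ) :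
    tangentComponent γ (x + a) (t + ℓ) = tangentComponent γ x t := by
  have hderiv : deriv γ (t + ℓ) = deriv γ t := by
    rw [← deriv_comp_add_const, show (fun u => γ (u + ℓ)) = fun u => γ u + a from funext hper,
      deriv_add_const]
  simp only [tangentComponent, hper, hderiv, add_sub_add_right_eq_sub]

end Curves

theorem stmt2_general
    (γ : ℝ → R3) (hγ : ContDiff ℝ 2 γ)
    (harcγ : ∀ s : ℝ, ‖deriv γ s‖ = 1)
    (ℓ : ℝ) (a : R3) (hperγ : ∀ s : ℝ, γ (s + ℓ) = γ s + a)
    (r : ℝ) (hr : 0 < r)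
    (hcurv : ∀ s : ℝ, ‖deriv (deriv γ) s‖ ≤ 1 / r)
    (Γ : ℝ → R3) (hΓlip : ∃ K : NNReal, LipschitzWith K Γ)
    (L : ℝ) (hL : 0 < L) (hperΓ : ∀ s : ℝ, Γ (s + L) = Γ s + a)
    (p : ℝ → ℝ) (hp : Continuous p) (hpper : ∀ s : ℝ, p (s + L) = p s + ℓ)
    (hclose : (⨆ s : ℝ, ‖Γ s - γ (p s)‖) < r / 8) :
    ∃! σ : ℝ → ℝ, Continuous σ ∧ ∀ s : ℝ,
      σ (s + L) = σ s + ℓ ∧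
      ‖Γ s - γ (σ s)‖ < r / 8 ∧
      (inner ℝ (Γ s - γ (σ s)) (deriv γ (σ s)) : ℝ) = 0 ∧
      |σ s - p s| < r / 4 := by
  obtain ⟨K, hK⟩ := hΓlip
  have hγd : Differentiable ℝ γ := hγ.differentiable (by norm_num)
  have hγ'd : Differentiable ℝ (deriv γ) :=
    (contDiff_succ_iff_deriv (n := 1).1 hγ).2.2.differentiable one_ne_zero
  have hper : Function.Periodic (fun s => ‖Γ s - γ (p s)‖) L := fun s => by
    simp only [hperΓ, hpper, hperγ, add_sub_add_right_eq_sub]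
  have hnear := hper.lt_of_iSup_lt hL.ne' (hK.continuous.sub (hγd.continuous.comp hp)).norm hclose
  choose σ hσ hσ0 using fun s => exists_tangentComponent_eq_zero hγd hγ'd harcγ hr hcurv (hnear s)
  have hanti s := strictAntiOn_tangentComponent hγd hγ'd harcγ hr hcurv (hnear s)
  have huniq s τ (hτ : |p s - τ| ≤ r / 4) (hτ0 : tangentComponent γ (Γ s) τ = 0) : τ = σ s :=
    (hanti s).injOn (mem_Icc_iff_abs_le.1 hτ) (Ioo_subset_Icc_self (hσ s)) (hτ0.trans (hσ0 s).symm)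
  refine ⟨σ, ⟨continuous_of_strictAntiOn_of_eq_zero hp (fun t => ?_) hanti hσ hσ0,
    fun s => ⟨?_, ?_, hσ0 s, ?_⟩⟩, ?_⟩
  · exact (hK.continuous.sub continuous_const).inner continuous_const
  · refine (huniq (s + L) (σ s + ℓ) ?_ ?_).symm
    · rw [hpper, add_sub_add_right_eq_sub]
      exact mem_Icc_iff_abs_le.2 (Ioo_subset_Icc_self (hσ s))
    · rw [hperΓ, tangentComponent_add_period hperγ]
      exact hσ0 s
  · exact (norm_sub_le_of_tangentComponent_eq_zero hγd hγ'd harcγ hr hcurv (hnear s)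
      (Ioo_subset_Icc_self (hσ s)) (hσ0 s) ⟨by linarith, by linarith⟩).trans_lt (hnear s)
  · exact abs_sub_lt_iff.2 ⟨by linarith [(hσ s).2], by linarith [(hσ s).1]⟩
  · rintro τ ⟨-, hτ⟩
    funext s
    obtain ⟨-, -, hτ0, hτp⟩ := hτ s
    exact huniq s (τ s) (abs_sub_comm (τ s) (p s) ▸ hτp.le) hτ0

/-- Corollary 3.5: existence and uniqueness of a reparametrization
of `γ` for `Γ`. -/
theorem stmt2
    (γ : ℝ → R3) (hγ : ContDiff ℝ 2 γ)
    (harcγ : ∀ s : ℝ, ‖deriv γ s‖ = 1)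
    (ℓ : ℝ) (hℓ : 0 < ℓ) (a : R3) (hperγ : ∀ s : ℝ, γ (s + ℓ) = γ s + a)
    (r : ℝ) (hr : 0 < r)
    (hcurv : ∀ s : ℝ, ‖deriv (deriv γ) s‖ ≤ 1 / r)
    (Γ : ℝ → R3) (hΓlip : ∃ K : NNReal, LipschitzWith K Γ)
    (harcΓ : ∀ᵐ s : ℝ ∂volume, ‖deriv Γ s‖ = 1)
    (L : ℝ) (hL : 0 < L) (hperΓ : ∀ s : ℝ, Γ (s + L) = Γ s + a)
    (p : ℝ → ℝ) (hp : Continuous p) (hpper : ∀ s : ℝ, p (s + L) = p s + ℓ)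
    (hclose : (⨆ s : ℝ, ‖Γ s - γ (p s)‖) < r / 8) :
    ∃! σ : ℝ → ℝ, Continuous σ ∧ ∀ s : ℝ,
      σ (s + L) = σ s + ℓ ∧
      ‖Γ s - γ (σ s)‖ < r / 8 ∧
      (inner ℝ (Γ s - γ (σ s)) (deriv γ (σ s)) : ℝ) = 0 ∧
      |σ s - p s| < r / 4 :=
  stmt2_general γ hγ harcγ ℓ a hperγ r hr hcurv Γ hΓlip L hL hperΓ p hp hpper hclose
end
end

section
/- Let γ : ℝ → ℝ³ be a C² curve with |γ'| ≡ 1, γ(s+ℓ) = γ(s) + a for all s (ℓ > 0, a ∈ ℝ³), and |γ''(s)| ≤ 1/r for all s with r > 0. Let Γ : ℝ → ℝ³ be Lipschitz with |Γ'(s)| = 1 for a.e. s and Γ(s+L) = Γ(s) + a for all s (L > 0). Let σ be a reparametrization of γ for Γ, i.e. σ : ℝ → ℝ is continuous and for all s: σ(s+L) = σ(s) + ℓ, |Γ(s) − γ(σ(s))| < r/8, and (Γ(s) − γ(σ(s))) · γ'(σ(s)) = 0. Then σ is a Lipschitz function on ℝ, and for almost every s ∈ ℝ, σ'(s) = (1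 + q(s)/(1 − q(s))) (Γ'(s) · γ'(σ(s))), where q(s) := (Γ(s) − γ(σ(s))) · γ''(σ(s)); in particular, for almost every s, σ'(s) ≤ 1 + (2/r) sup_{τ ∈ ℝ} |Γ(τ) − γ(σ(τ))|. -/
/-!
The foot parameter `σ s` is pinned down by `⟪Γ s - γ (σ s), γ' (σ s)⟫ = 0`. For a point `c`
within `5r/8` of an arc of `γ`, the function `t ↦ ⟪c - γ t, γ' t⟫` has derivative
`⟪c - γ t, γ'' t⟫ - 1 ≤ -3/8`, so it decreases at a definite rate along the arc. Comparing it at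
the feet of `Γ s` and `Γ p` gives `(3/8) |σ s - σ p| ≤ ‖Γ s - Γ p‖` whenever
`|σ s - σ p| ≤ r/2`, and by continuity of `σ` and the intermediate value theorem this
restriction is harmless, so `σ` is Lipschitz. Where `σ` and `Γ` are differentiable,
differentiating the orthogonality relation gives `σ' (1 - q) = ⟪Γ', γ' ∘ σ⟫`, where
`|q| ≤ 1/8` keeps `1 - q` away from `0`.
-/

noncomputable section
open Real MeasureTheory

open Set Finset
open scoped NNReal RealInnerProductSpace

section LocalToGlobal

variable {α : Type*} [PseudoMetricSpace α] {f : ℝ → α}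

theorem Continuous.dist_le_of_mul_dist_lt (hf : Continuous f) {C R : ℝ} (hC : 0 ≤ C)
    (h : ∀ x y, dist (f x) (f y) ≤ R → dist (f x) (f y) ≤ C * dist x y)
    {x y : ℝ} (hxy : C * dist x y < R) : dist (f x) (f y) ≤ R := by
  by_contra! hR
  have hR₀ : 0 ≤ R := (mul_nonneg hC dist_nonneg).trans hxy.le
  have hcont : ContinuousOn (fun t => dist (f x) (f t)) (uIcc x y) := by fun_prop
  obtain ⟨t, ht, hft⟩ : R ∈ (fun t => dist (f x) (f t)) '' uIcc x y :=
    intermediate_value_uIcc hcont (mem_uIcc.2 (Or.inl ⟨by simpa using hR₀, hR.le⟩))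
  have hxt : dist x t ≤ dist x y := by
    simpa only [Real.dist_eq, abs_sub_comm x] using abs_sub_left_of_mem_uIcc ht
  have hCt := h x t hft.le
  nlinarith

theorem Continuous.lipschitzWith_of_dist_le_mul (hf : Continuous f) {C : ℝ≥0} {R : ℝ}
    (hR : 0 < R) (h : ∀ x y, dist (f x) (f y) ≤ R → dist (f x) (f y) ≤ C * dist x y) :
    LipschitzWith C f := by
  set δ := R / (C + 1)
  have hδ : 0 < δ := by positivity
  have hlocal : ∀ u v, dist u v ≤ δ → dist (f u) (f v) ≤ C * dist u v := by
    refine fun u v huv => h u v (hf.dist_le_of_mul_dist_lt C.2 h ?_)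
    calc (C : ℝ) * dist u v ≤ C * δ := by gcongr
      _ < R := by rw [mul_div_assoc', div_lt_iff₀ (by positivity)]; nlinarith
  refine LipschitzWith.of_dist_le_mul fun x y => ?_
  obtain ⟨n, hn⟩ := exists_nat_gt (dist x y / δ)
  have hn₀ : (0 : ℝ) < n := (div_nonneg dist_nonneg hδ.le).trans_lt hn
  set p : ℕ → ℝ := fun k => x + k * ((y - x) / n)
  have hstep : ∀ k, dist (p k) (p (k + 1)) = dist x y / n := fun k => by
    have : p k - p (k + 1) = -((y - x) / n) := by simp only [p]; push_cast; ring
    rw [Real.dist_eq, this, abs_neg, abs_div, abs_of_pos hn₀, ← Real.dist_eq, dist_comm]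
  have hsmall : dist x y / n ≤ δ := by
    rw [div_le_iff₀ hn₀]; rw [div_lt_iff₀ hδ] at hn; linarith
  calc dist (f x) (f y) = dist (f (p 0)) (f (p n)) := by
        simp only [p, CharP.cast_eq_zero, zero_mul, add_zero]
        rw [mul_div_cancel₀ _ hn₀.ne', add_sub_cancel]
    _ ≤ ∑ k ∈ range n, dist (f (p k)) (f (p (k + 1))) := dist_le_range_sum_dist (f ∘ p) n
    _ ≤ ∑ _k ∈ range n, C * (dist x y / n) :=
        sum_le_sum fun k _ => (hlocal _ _ ((hstep k).trans_le hsmall)).trans_eq (by rw [hstep])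
    _ = C * dist x y := by rw [sum_const, card_range, nsmul_eq_mul]; field_simp

end LocalToGlobal

section UnitSpeedCurve

variable {E : Type*} [NormedAddCommGroup E] [InnerProductSpace ℝ E] {γ : ℝ → E}

theorem hasDerivAt_inner_sub_deriv {t : ℝ} (hγ : DifferentiableAt ℝ γ t)
    (hγ' : DifferentiableAt ℝ (deriv γ) t) (hunit : ‖deriv γ t‖ = 1) (c : E) :
    HasDerivAt (fun u => ⟪c - γ u, deriv γ u⟫) (⟪c - γ t, deriv (deriv γ) t⟫ - 1) t := by
  refine ((hγ.hasDerivAt.const_sub c).inner ℝ hγ'.hasDerivAt).congr_deriv ?_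
  rw [inner_neg_left, real_inner_self_eq_norm_mul_norm, hunit]
  ring

theorem mul_abs_sub_le_abs_inner_sub (hγ : Differentiable ℝ γ)
    (hγ' : Differentiable ℝ (deriv γ)) (hunit : ∀ t, ‖deriv γ t‖ = 1) {κ d : ℝ}
    (hcurv : ∀ t, ‖deriv (deriv γ) t‖ ≤ κ) {c : E} {x y : ℝ}
    (hc : ∀ t ∈ uIcc x y, ‖c - γ t‖ ≤ d) :
    (1 - d * κ) * |x - y| ≤ |⟪c - γ x, deriv γ x⟫ - ⟪c - γ y, deriv γ y⟫| := by
  wlog hxy : x < y generalizing x y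
  · rcases (not_lt.1 hxy).eq_or_lt with rfl | hyx
    · simp
    · rw [abs_sub_comm x, abs_sub_comm (⟪c - γ x, _⟫)]
      exact this (by rwa [Set.uIcc_comm]) hyx
  have hderiv := fun t => hasDerivAt_inner_sub_deriv (hγ t) (hγ' t) (hunit t) c
  obtain ⟨ξ, hξ, hslope⟩ := exists_hasDerivAt_eq_slope _ _ hxy
    (HasDerivAt.continuousOn fun t _ => hderiv t) fun t _ => hderiv t
  have hξd : ⟪c - γ ξ, deriv (deriv γ) ξ⟫ ≤ d * κ :=
    (real_inner_le_norm _ _).trans <| mul_le_mul (hc ξ (Ioo_subset_Icc_self.trans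
      Icc_subset_uIcc hξ)) (hcurv ξ) (norm_nonneg _) ((norm_nonneg _).trans (hc x left_mem_uIcc))
  rw [eq_div_iff (sub_pos.2 hxy).ne'] at hslope
  rw [abs_of_neg (sub_neg.2 hxy)]
  refine le_trans ?_ (le_abs_self _)
  nlinarith

theorem mul_abs_sub_le_norm_sub_of_inner_eq_zero (hγ : Differentiable ℝ γ)
    (hγ' : Differentiable ℝ (deriv γ)) (hunit : ∀ t, ‖deriv γ t‖ = 1) {κ : ℝ}
    (hcurv : ∀ t, ‖deriv (deriv γ) t‖ ≤ κ) {P Q : E} {u v d : ℝ}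
    (hP : ⟪P - γ u, deriv γ u⟫ = 0) (hQ : ⟪Q - γ v, deriv γ v⟫ = 0) (hQd : ‖Q - γ v‖ ≤ d) :
    (1 - (d + |u - v|) * κ) * |u - v| ≤ ‖Q - P‖ := by
  have hγlip : LipschitzWith 1 γ :=
    lipschitzWith_of_nnnorm_deriv_le hγ fun t => by simp [← NNReal.coe_le_coe, hunit]
  have hnear : ∀ t ∈ uIcc u v, ‖Q - γ t‖ ≤ d + |u - v| := fun t ht => by
    have hγt : ‖γ v - γ t‖ ≤ |t - v| := by
      simpa [dist_eq_norm, Real.dist_eq, abs_sub_comm] using hγlip.dist_le_mul v t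
    calc ‖Q - γ t‖ ≤ ‖Q - γ v‖ + ‖γ v - γ t‖ := norm_sub_le_norm_sub_add_norm_sub _ _ _
      _ ≤ d + |u - v| := add_le_add hQd (hγt.trans (abs_sub_left_of_mem_uIcc (uIcc_comm u v ▸ ht)))
  have hfoot : ⟪Q - γ u, deriv γ u⟫ = ⟪Q - P, deriv γ u⟫ := by
    rw [← sub_add_sub_cancel Q P (γ u), inner_add_left, hP, add_zero]
  calc (1 - (d + |u - v|) * κ) * |u - v|
      ≤ |⟪Q - γ u, deriv γ u⟫ - ⟪Q - γ v, deriv γ v⟫| :=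
        mul_abs_sub_le_abs_inner_sub hγ hγ' hunit hcurv hnear
    _ ≤ ‖Q - P‖ := by
        rw [hQ, sub_zero, hfoot]
        simpa [hunit] using abs_real_inner_le_norm (Q - P) (deriv γ u)

theorem lipschitzWith_of_forall_inner_sub_eq_zero (hγ : Differentiable ℝ γ)
    (hγ' : Differentiable ℝ (deriv γ)) (hunit : ∀ t, ‖deriv γ t‖ = 1) {r : ℝ} (hr : 0 < r)
    (hcurv : ∀ t, ‖deriv (deriv γ) t‖ ≤ 1 / r) {Γ : ℝ → E} {K : ℝ≥0} (hΓ : LipschitzWith K Γ)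
    {σ : ℝ → ℝ} (hσ : Continuous σ) (hnear : ∀ s, ‖Γ s - γ (σ s)‖ ≤ r / 8)
    (horth : ∀ s, ⟪Γ s - γ (σ s), deriv γ (σ s)⟫ = 0) :
    LipschitzWith (8 / 3 * K) σ := by
  refine hσ.lipschitzWith_of_dist_le_mul (half_pos hr) fun x y hxy => ?_
  rw [Real.dist_eq] at hxy ⊢
  have hfoot := mul_abs_sub_le_norm_sub_of_inner_eq_zero hγ hγ' hunit hcurv (horth x) (horth y)
    (hnear y)
  have hrate : 3 / 8 ≤ 1 - (r / 8 + |σ x - σ y|) * (1 / r) := by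
    have : (r / 8 + |σ x - σ y|) * (1 / r) = 1 / 8 + |σ x - σ y| / r := by field_simp
    rw [this]
    linarith [(div_le_iff₀ hr).2 (by linarith : |σ x - σ y| ≤ 1 / 2 * r)]
  have hΓxy : ‖Γ y - Γ x‖ ≤ K * dist x y := by
    rw [norm_sub_rev, ← dist_eq_norm]
    exact hΓ.dist_le_mul x y
  push_cast
  linarith [mul_le_mul_of_nonneg_right hrate (abs_nonneg (σ x - σ y))]

theorem deriv_mul_one_sub_inner_eq {Γ : ℝ → E} {σ : ℝ → ℝ} {s : ℝ}
    (hγ : DifferentiableAt ℝ γ (σ s)) (hγ' : DifferentiableAt ℝ (deriv γ) (σ s))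
    (hunit : ‖deriv γ (σ s)‖ = 1) (hΓ : DifferentiableAt ℝ Γ s) (hσ : DifferentiableAt ℝ σ s)
    (horth : ∀ t, ⟪Γ t - γ (σ t), deriv γ (σ t)⟫ = 0) :
    deriv σ s * (1 - ⟪Γ s - γ (σ s), deriv (deriv γ) (σ s)⟫) = ⟪deriv Γ s, deriv γ (σ s)⟫ := by
  have hφ := (hΓ.hasDerivAt.sub (hγ.hasDerivAt.scomp s hσ.hasDerivAt)).inner ℝ
    (hγ'.hasDerivAt.scomp s hσ.hasDerivAt)
  have hφ₀ : HasDerivAt (fun t => ⟪Γ t - γ (σ t), deriv γ (σ t)⟫) 0 s := by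
    simpa only [horth] using hasDerivAt_const s (0 : ℝ)
  have h := hφ.unique hφ₀
  simp only [Pi.sub_apply, Function.comp_apply, inner_smul_right, inner_sub_left, inner_smul_left,
    real_inner_self_eq_norm_mul_norm, hunit, RCLike.conj_to_real] at h
  rw [inner_sub_left]
  linarith

end UnitSpeedCurve

theorem le_one_add_two_mul_of_mul_one_sub_eq {x q p m : ℝ} (h : x * (1 - q) = p) (hp : p ≤ 1)
    (hqm : q ≤ m) (hm : 0 ≤ m) (hq : q ≤ 1 / 2) : x ≤ 1 + 2 * m := by
  nlinarith

theorem stmt3_general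
    (γ : ℝ → R3) (hγ : ContDiff ℝ 2 γ)
    (harcγ : ∀ s : ℝ, ‖deriv γ s‖ = 1)
    (ℓ : ℝ)
    (r : ℝ) (hr : 0 < r)
    (hcurv : ∀ s : ℝ, ‖deriv (deriv γ) s‖ ≤ 1 / r)
    (Γ : ℝ → R3) (hΓlip : ∃ K : NNReal, LipschitzWith K Γ)
    (harcΓ : ∀ᵐ s : ℝ ∂volume, ‖deriv Γ s‖ = 1)
    (L : ℝ)
    (σ : ℝ → ℝ) (hσc : Continuous σ)
    (hσ : ∀ s : ℝ,
      σ (s + L) = σ s + ℓ ∧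
      ‖Γ s - γ (σ s)‖ < r / 8 ∧
      (inner ℝ (Γ s - γ (σ s)) (deriv γ (σ s)) : ℝ) = 0) :
    (∃ K : NNReal, LipschitzWith K σ) ∧
    (∀ᵐ s : ℝ ∂volume,
      deriv σ s =
        (1 + (inner ℝ (Γ s - γ (σ s)) (deriv (deriv γ) (σ s)) : ℝ) /
            (1 - (inner ℝ (Γ s - γ (σ s)) (deriv (deriv γ) (σ s)) : ℝ))) *
          (inner ℝ (deriv Γ s) (deriv γ (σ s)) : ℝ) ∧
      deriv σ s ≤ 1 + (2 / r) * ⨆ τ : ℝ, ‖Γ τ - γ (σ τ)‖) := by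
  obtain ⟨K, hK⟩ := hΓlip
  have hγd : Differentiable ℝ γ := hγ.differentiable two_ne_zero
  have hγ'd : Differentiable ℝ (deriv γ) := hγ.differentiable_deriv_two
  have hnear : ∀ s, ‖Γ s - γ (σ s)‖ ≤ r / 8 := fun s => (hσ s).2.1.le
  have horth : ∀ s, ⟪Γ s - γ (σ s), deriv γ (σ s)⟫ = 0 := fun s => (hσ s).2.2
  have hσlip := lipschitzWith_of_forall_inner_sub_eq_zero hγd hγ'd harcγ hr hcurv hK hσc hnear horth
  refine ⟨⟨_, hσlip⟩, ?_⟩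
  have hbdd : BddAbove (range fun τ => ‖Γ τ - γ (σ τ)‖) := ⟨r / 8, forall_mem_range.2 hnear⟩
  filter_upwards [hσlip.ae_differentiableAt, hK.ae_differentiableAt, harcΓ] with s hσs hΓs hΓ's
  have hkey := deriv_mul_one_sub_inner_eq (hγd _) (hγ'd _) (harcγ _) hΓs hσs horth
  set q := ⟪Γ s - γ (σ s), deriv (deriv γ) (σ s)⟫
  set M := ⨆ τ : ℝ, ‖Γ τ - γ (σ τ)‖
  have hqd : q ≤ ‖Γ s - γ (σ s)‖ / r := (real_inner_le_norm _ _).trans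
    ((mul_le_mul_of_nonneg_left (hcurv _) (norm_nonneg _)).trans_eq (mul_one_div _ _))
  have hqM : q ≤ M / r := hqd.trans (div_le_div_of_nonneg_right (le_ciSup hbdd s) hr.le)
  have hq : q ≤ 1 / 8 := hqd.trans (by rw [div_le_iff₀ hr]; linarith [hnear s])
  refine ⟨?_, ?_⟩
  · have h1q : 1 - q ≠ 0 := by linarith
    rw [← hkey]
    field_simp
    ring
  · have hP : ⟪deriv Γ s, deriv γ (σ s)⟫ ≤ 1 := by
      simpa [hΓ's, harcγ] using real_inner_le_norm (deriv Γ s) (deriv γ (σ s))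
    calc deriv σ s ≤ 1 + 2 * (M / r) := le_one_add_two_mul_of_mul_one_sub_eq hkey hP hqM
          (div_nonneg ((norm_nonneg _).trans (le_ciSup hbdd 0)) hr.le) (by linarith)
      _ = 1 + 2 / r * M := by ring

/-- Corollary 3.6: a reparametrization is Lipschitz, formula and
bound for its derivative. -/
theorem stmt3
    (γ : ℝ → R3) (hγ : ContDiff ℝ 2 γ)
    (harcγ : ∀ s : ℝ, ‖deriv γ s‖ = 1)
    (ℓ : ℝ) (hℓ : 0 < ℓ) (a : R3) (hperγ : ∀ s : ℝ, γ (s + ℓ) = γ s + a)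
    (r : ℝ) (hr : 0 < r)
    (hcurv : ∀ s : ℝ, ‖deriv (deriv γ) s‖ ≤ 1 / r)
    (Γ : ℝ → R3) (hΓlip : ∃ K : NNReal, LipschitzWith K Γ)
    (harcΓ : ∀ᵐ s : ℝ ∂volume, ‖deriv Γ s‖ = 1)
    (L : ℝ) (hL : 0 < L) (hperΓ : ∀ s : ℝ, Γ (s + L) = Γ s + a)
    (σ : ℝ → ℝ) (hσc : Continuous σ)
    (hσ : ∀ s : ℝ,
      σ (s + L) = σ s + ℓ ∧
      ‖Γ s - γ (σ s)‖ < r / 8 ∧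
      (inner ℝ (Γ s - γ (σ s)) (deriv γ (σ s)) : ℝ) = 0) :
    (∃ K : NNReal, LipschitzWith K σ) ∧
    (∀ᵐ s : ℝ ∂volume,
      deriv σ s =
        (1 + (inner ℝ (Γ s - γ (σ s)) (deriv (deriv γ) (σ s)) : ℝ) /
            (1 - (inner ℝ (Γ s - γ (σ s)) (deriv (deriv γ) (σ s)) : ℝ))) *
          (inner ℝ (deriv Γ s) (deriv γ (σ s)) : ℝ) ∧
      deriv σ s ≤ 1 + (2 / r) * ⨆ τ : ℝ, ‖Γ τ - γ (σ τ)‖) :=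
  stmt3_general γ hγ harcγ ℓ r hr hcurv Γ hΓlip harcΓ L σ hσc hσ
end
end
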